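/- arXiv:math/0104099 — 4 statements merged into one kernel-verified Lean document; each statement's English description precedes it below -/
import Mathlib

section
/- Let V = ℚ^n and let the symmetric group Σ_d act on V^{⊗d} by permuting tensor factors. Then the commutant algebra S(n,d) = End_{Σ_d}(V^{⊗d}) has dimension binom(n² + d - 1, d) over ℚ. -/
open scoped BigOperators

/-- `V^{⊗d}` for `V = ℚ^n`, modeled as functions on the basis of pure tensors. -/
abbrev TP (n d : ℕ) : Type := (Fin d → Fin n) → ℚ

/-- The operator on `V^{⊗d}` induced (via the derivation action) by the matrix unit `E i j`. -/
noncomputable def EU (n d : ℕ) (i j : Fin n) : Module.End ℚ (TP n d) where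
  toFun f := fun w => ∑ p : Fin d, if w p = i then f (Function.update w p j) else 0
  map_add' f g := by
    funext w
    simp only [Pi.add_apply]
    rw [← Finset.sum_add_distrib]
    refine Finset.sum_congr rfl fun p _ => ?_
    split <;> simp
  map_smul' c f := by
    funext w
    simp only [Pi.smul_apply, smul_eq_mul, RingHom.id_apply, Finset.mul_sum]
    refine Finset.sum_congr rfl fun p _ => ?_
    split <;> simp

/-- The place-permutation operator on `V^{⊗d}`. -/
def permOp (n d : ℕ) (σ : Equiv.Perm (Fin d)) : Module.End ℚ (TP n d) where
  toFun f := fun w => f (w ∘ σ)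
  map_add' _ _ := rfl
  map_smul' _ _ := rfl

/-- content (weight) of a basis tensor -/
def content (n d : ℕ) (w : Fin d → Fin n) : Fin n → ℕ :=
  fun k => (Finset.univ.filter (fun p => w p = k)).card

/-- projection onto the span of basis tensors of content `μ` -/
noncomputable def proj (n d : ℕ) (μ : Fin n → ℕ) : Module.End ℚ (TP n d) where
  toFun f := fun w => if content n d w = μ then f w else 0
  map_add' f g := by funext w; by_cases h : content n d w = μ <;> simp [h]
  map_smul' c f := by funext w; by_cases h : content n d w = μ <;> simp [h]

/-- the set `Λ(n,d)` of `n`-part compositions of `d`, as a finset of `ℕ^n` -/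
def Lam (n d : ℕ) : Finset (Fin n → ℕ) :=
  ((Finset.univ : Finset (Fin n → Fin (d+1))).image (fun μ k => (μ k : ℕ))).filter
    (fun lam => ∑ k, lam k = d)

/-- `binom(A, m) = A(A-1)⋯(A-m+1)/m!` for an operator `A` -/
noncomputable def binomOp {M : Type*} [AddCommGroup M] [Module ℚ M]
    (A : Module.End ℚ M) (m : ℕ) : Module.End ℚ M :=
  (m.factorial : ℚ)⁻¹ • Polynomial.aeval A (descPochhammer ℚ m)

/-- divided power `A^{(m)} = A^m/m!` -/
noncomputable def dpow {M : Type*} [AddCommGroup M] [Module ℚ M]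
    (A : Module.End ℚ M) (m : ℕ) : Module.End ℚ M :=
  (m.factorial : ℚ)⁻¹ • A ^ m

namespace SchurAux

variable {n d : ℕ}

/-- two tuples with permutation-equivalent value lists differ by a permutation of indices
(linear order version) -/
theorem exists_perm_of_perm_ofFn {α : Type*} [LinearOrder α] {d : ℕ} {f g : Fin d → α}
    (h : (List.ofFn f).Perm (List.ofFn g)) : ∃ σ : Equiv.Perm (Fin d), f = g ∘ σ := by
  have hfg : f ∘ Tuple.sort f = g ∘ Tuple.sort g := by
    apply List.ofFn_injective
    refine List.Perm.eq_of_sortedLE (Tuple.monotone_sort f).sortedLE_ofFn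
      (Tuple.monotone_sort g).sortedLE_ofFn ?_
    exact (((Tuple.sort f).ofFn_comp_perm f).trans h).trans
      ((Tuple.sort g).ofFn_comp_perm g).symm
  refine ⟨(Tuple.sort f).symm.trans (Tuple.sort g), ?_⟩
  funext x
  have := congrFun hfg ((Tuple.sort f).symm x)
  simpa using this

/-- general version via embedding into a linearly ordered type -/
theorem exists_perm_of_perm_ofFn' {α β : Type*} [LinearOrder β] (e : α → β)
    (he : Function.Injective e) {d : ℕ} {f g : Fin d → α}
    (h : (List.ofFn f).Perm (List.ofFn g)) : ∃ σ : Equiv.Perm (Fin d), f = g ∘ σ := by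
  have h' : (List.ofFn (e ∘ f)).Perm (List.ofFn (e ∘ g)) := by
    rw [← List.map_ofFn, ← List.map_ofFn]
    exact h.map e
  obtain ⟨σ, hσ⟩ := exists_perm_of_perm_ofFn h'
  exact ⟨σ, funext fun x => he (congrFun hσ x)⟩

end SchurAux

namespace SchurAux

/-- the multiset of letter-pairs of a pair of words -/
def key (n d : ℕ) (x : (Fin d → Fin n) × (Fin d → Fin n)) : Sym (Fin n × Fin n) d :=
  ⟨Multiset.map (fun p => (x.1 p, x.2 p)) Finset.univ.val, by
    simp [Finset.card_univ]⟩

theorem univ_val_map_perm {d : ℕ} (σ : Equiv.Perm (Fin d)) :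
    (Finset.univ.val.map (σ : Fin d → Fin d)) = Finset.univ.val := by
  rw [Fin.univ_val_map]
  have h : (List.ofFn (σ : Fin d → Fin d)).Perm (List.ofFn (id : Fin d → Fin d)) :=
    σ.ofFn_comp_perm (id : Fin d → Fin d)
  calc ((List.ofFn (σ : Fin d → Fin d) : List (Fin d)) : Multiset (Fin d))
      = ((List.ofFn (id : Fin d → Fin d) : List (Fin d)) : Multiset (Fin d)) :=
        Multiset.coe_eq_coe.mpr h
    _ = Finset.univ.val := by rw [← Fin.univ_val_map]; simp

theorem key_comp (x : (Fin d → Fin n) × (Fin d → Fin n)) (σ : Equiv.Perm (Fin d)) :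
    key n d (x.1 ∘ σ, x.2 ∘ σ) = key n d x := by
  apply Subtype.ext
  simp only [key]
  have h1 : (fun p => ((x.1 ∘ σ) p, (x.2 ∘ σ) p)) = (fun p => (x.1 p, x.2 p)) ∘ σ := rfl
  rw [h1, ← Multiset.map_map, univ_val_map_perm]

theorem key_eq_imp {x y : (Fin d → Fin n) × (Fin d → Fin n)} (h : key n d x = key n d y) :
    ∃ σ : Equiv.Perm (Fin d), y.1 = x.1 ∘ σ ∧ y.2 = x.2 ∘ σ := by
  have hm : Multiset.map (fun p => (x.1 p, x.2 p)) Finset.univ.val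
      = Multiset.map (fun p => (y.1 p, y.2 p)) Finset.univ.val := congrArg Subtype.val h
  rw [Fin.univ_val_map, Fin.univ_val_map, Multiset.coe_eq_coe] at hm
  obtain ⟨σ, hσ⟩ := exists_perm_of_perm_ofFn' (finProdFinEquiv : Fin n × Fin n ≃ Fin (n * n))
    finProdFinEquiv.injective hm.symm
  refine ⟨σ, ?_, ?_⟩
  · funext p; exact congrArg Prod.fst (congrFun hσ p)
  · funext p; exact congrArg Prod.snd (congrFun hσ p)

/-- a canonical section of `key` -/
noncomputable def sec (n d : ℕ) (s : Sym (Fin n × Fin n) d) :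
    (Fin d → Fin n) × (Fin d → Fin n) :=
  (fun p => (s.1.toList.get
      ⟨p, by rw [Multiset.length_toList, s.2]; exact p.2⟩).1,
   fun p => (s.1.toList.get
      ⟨p, by rw [Multiset.length_toList, s.2]; exact p.2⟩).2)

theorem ofFn_get_cast {α : Type*} {d : ℕ} (l : List α) (hl : l.length = d) :
    (List.ofFn fun p : Fin d => l.get ⟨p, by rw [hl]; exact p.2⟩) = l := by
  subst hl
  simp

theorem key_sec (s : Sym (Fin n × Fin n) d) : key n d (sec n d s) = s := by
  apply Subtype.ext
  simp only [key]
  have hl : s.1.toList.length = d := by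
    rw [Multiset.length_toList, s.2]
  have h1 : (fun p : Fin d => ((sec n d s).1 p, (sec n d s).2 p))
      = fun p : Fin d => s.1.toList.get ⟨p, by rw [hl]; exact p.2⟩ := by
    funext p; simp [sec]
  rw [h1, Fin.univ_val_map]
  have h2 : List.ofFn (fun p : Fin d =>
      s.1.toList.get ⟨p, by rw [hl]; exact p.2⟩)
      = s.1.toList := ofFn_get_cast _ hl
  rw [h2, Multiset.coe_toList]

end SchurAux

namespace SchurAux

variable {n d : ℕ}

/-- delta basis function -/
noncomputable def delta (n d : ℕ) (w : Fin d → Fin n) : TP n d :=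
  fun v => if v = w then 1 else 0

/-- matrix coefficient of an endomorphism -/
noncomputable def mat (T : Module.End ℚ (TP n d)) (x : (Fin d → Fin n) × (Fin d → Fin n)) : ℚ :=
  T (delta n d x.2) x.1

theorem apply_eq_sum_mat (T : Module.End ℚ (TP n d)) (f : TP n d) (w : Fin d → Fin n) :
    T f w = ∑ w' : Fin d → Fin n, mat T (w, w') * f w' := by
  have hf : f = ∑ w' : Fin d → Fin n, f w' • delta n d w' := by
    funext v
    rw [Finset.sum_apply]
    simp only [Pi.smul_apply, delta, smul_eq_mul, mul_ite, mul_one, mul_zero]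
    rw [Finset.sum_ite_eq Finset.univ v f]
    simp
  conv_lhs => rw [hf]
  rw [map_sum, Finset.sum_apply]
  refine Finset.sum_congr rfl fun w' _ => ?_
  rw [map_smul]
  simp [mat, mul_comm]

theorem permOp_delta (σ : Equiv.Perm (Fin d)) (w : Fin d → Fin n) :
    permOp n d σ (delta n d (w ∘ σ)) = delta n d w := by
  funext v
  show delta n d (w ∘ σ) (v ∘ σ) = delta n d w v
  simp only [delta]
  congr 1
  simp only [eq_iff_iff]
  constructor
  · intro h
    funext p
    have := congrFun h (σ.symm p)
    simpa using this
  · intro h; rw [h]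

theorem mat_comp_of_mem {T : Module.End ℚ (TP n d)}
    (hT : T ∈ Subalgebra.centralizer ℚ (Set.range (permOp n d)))
    (σ : Equiv.Perm (Fin d)) (x : (Fin d → Fin n) × (Fin d → Fin n)) :
    mat T (x.1 ∘ σ, x.2 ∘ σ) = mat T x := by
  rw [Subalgebra.mem_centralizer_iff] at hT
  have hc : permOp n d σ * T = T * permOp n d σ := hT _ ⟨σ, rfl⟩
  have h1 := congrFun (congrArg (fun S : Module.End ℚ (TP n d) => S (delta n d (x.2 ∘ σ))) hc) x.1
  simp only [Module.End.mul_apply] at h1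
  calc mat T (x.1 ∘ σ, x.2 ∘ σ) = permOp n d σ (T (delta n d (x.2 ∘ σ))) x.1 := rfl
    _ = T (permOp n d σ (delta n d (x.2 ∘ σ))) x.1 := h1
    _ = mat T x := by rw [permOp_delta]; rfl

theorem mat_sec_key {T : Module.End ℚ (TP n d)}
    (hT : T ∈ Subalgebra.centralizer ℚ (Set.range (permOp n d)))
    (x : (Fin d → Fin n) × (Fin d → Fin n)) :
    mat T (sec n d (key n d x)) = mat T x := by
  obtain ⟨σ, h1, h2⟩ := key_eq_imp (x := x) (y := sec n d (key n d x)) (key_sec (key n d x)).symm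
  have : sec n d (key n d x) = (x.1 ∘ σ, x.2 ∘ σ) := Prod.ext h1 h2
  rw [this, mat_comp_of_mem hT]

/-- reconstruction of an endomorphism from a function on orbits -/
noncomputable def recon (n d : ℕ) (g : Sym (Fin n × Fin n) d → ℚ) :
    Module.End ℚ (TP n d) where
  toFun f := fun w => ∑ w' : Fin d → Fin n, g (key n d (w, w')) * f w'
  map_add' f₁ f₂ := by
    funext w
    simp only [Pi.add_apply]
    rw [← Finset.sum_add_distrib]
    exact Finset.sum_congr rfl fun w' _ => by ring
  map_smul' c f := by
    funext w
    simp only [Pi.smul_apply, smul_eq_mul, RingHom.id_apply, Finset.mul_sum]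
    exact Finset.sum_congr rfl fun w' _ => by ring

/-- the precomposition equivalence -/
def compEquiv (n : ℕ) (σ : Equiv.Perm (Fin d)) : (Fin d → Fin n) ≃ (Fin d → Fin n) where
  toFun w := w ∘ σ
  invFun w := w ∘ σ.symm
  left_inv w := by funext p; simp
  right_inv w := by funext p; simp

theorem recon_mem (g : Sym (Fin n × Fin n) d → ℚ) :
    recon n d g ∈ Subalgebra.centralizer ℚ (Set.range (permOp n d)) := by
  rw [Subalgebra.mem_centralizer_iff]
  rintro - ⟨σ, rfl⟩
  apply LinearMap.ext
  intro f
  funext w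
  show (recon n d g f) (w ∘ σ) = recon n d g (fun v => f (v ∘ σ)) w
  show ∑ w' : Fin d → Fin n, g (key n d (w ∘ σ, w')) * f w'
      = ∑ w' : Fin d → Fin n, g (key n d (w, w')) * f (w' ∘ σ)
  refine Fintype.sum_equiv (compEquiv n σ.symm) _ _ fun w' => ?_
  show g (key n d (w ∘ σ, w')) * f w'
      = g (key n d (w, w' ∘ σ.symm)) * f ((w' ∘ σ.symm) ∘ σ)
  have h1 : (w' ∘ σ.symm) ∘ σ = w' := by funext p; simp
  have h2 : key n d (w, w' ∘ σ.symm) = key n d (w ∘ σ, w') := by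
    have := key_comp (w, w' ∘ σ.symm) σ
    rw [← this, h1]
  rw [h1, h2]

end SchurAux

namespace SchurAux

set_option synthInstance.maxHeartbeats 1000000 in
set_option maxHeartbeats 1000000 in
noncomputable def orbitEquiv (n d : ℕ) :
    (Subalgebra.centralizer ℚ (Set.range (permOp n d)) :
      Subalgebra ℚ (Module.End ℚ (TP n d))) ≃ₗ[ℚ] (Sym (Fin n × Fin n) d → ℚ) where
  toFun T := fun s => mat (T : Module.End ℚ (TP n d)) (sec n d s)
  map_add' T₁ T₂ := by
    funext s
    simp [mat]
  map_smul' c T := by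
    funext s
    simp [mat]
  invFun g := ⟨recon n d g, recon_mem g⟩
  left_inv T := by
    apply Subtype.ext
    apply LinearMap.ext
    intro f
    funext w
    show ∑ w' : Fin d → Fin n,
        (mat (T : Module.End ℚ (TP n d)) (sec n d (key n d (w, w')))) * f w'
        = (T : Module.End ℚ (TP n d)) f w
    rw [apply_eq_sum_mat (T : Module.End ℚ (TP n d)) f w]
    exact Finset.sum_congr rfl fun w' _ => by rw [mat_sec_key T.2]
  right_inv g := by
    funext s
    show ∑ w' : Fin d → Fin n, g (key n d ((sec n d s).1, w')) * delta n d (sec n d s).2 w' = g s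
    have h : ∀ w' : Fin d → Fin n,
        g (key n d ((sec n d s).1, w')) * delta n d (sec n d s).2 w'
        = if w' = (sec n d s).2 then g (key n d ((sec n d s).1, w')) else 0 := by
      intro w'
      simp only [delta, mul_ite, mul_one, mul_zero]
    simp only [h]
    rw [Finset.sum_ite_eq' Finset.univ (sec n d s).2
      (fun w' => g (key n d ((sec n d s).1, w')))]
    simp only [Finset.mem_univ, if_true]
    have : ((sec n d s).1, (sec n d s).2) = sec n d s := rfl
    rw [this, key_sec]

end SchurAux

set_option synthInstance.maxHeartbeats 1000000 in
set_option maxHeartbeats 1000000 in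
/-- The Schur algebra `S(n,d) = End_{Σ_d}(V^{⊗d})`, the centralizer of the
place-permutation action of the symmetric group, has dimension `binom(n²+d-1, d)` over `ℚ`. -/
theorem schur_algebra_dimension (n d : ℕ) :
    Module.finrank ℚ
      (Subalgebra.centralizer ℚ (Set.range (permOp n d)) :
        Subalgebra ℚ (Module.End ℚ (TP n d))) = Nat.choose (n ^ 2 + d - 1) d := by
  rw [(SchurAux.orbitEquiv n d).finrank_eq, Module.finrank_pi ℚ,
    Sym.card_sym_eq_choose, Fintype.card_prod, Fintype.card_fin, ← pow_two]
end

section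
/- With H_k the operator on V^{⊗d} induced by E_{kk} ∈ gl_n, and λ ∈ Λ(n,d), the operator 1_λ := Π_{k=1}^n binom(H_k, λ_k) (where binom(H,m) = H(H-1)···(H-m+1)/m!) equals the projection onto the λ-weight space of V^{⊗d}, i.e., onto the span of basis tensors of content λ. -/
open scoped BigOperators

/-- For `λ ∈ Λ(n,d)`, the operator `Π_k binom(H_k, λ_k)` equals the projection onto the
`λ`-weight space of `V^{⊗d}`. -/
theorem binom_prod_eq_proj (n d : ℕ) (lam : Fin n → ℕ) (hlam : lam ∈ Lam n d) :
    (List.ofFn (fun k : Fin n => binomOp (EU n d k k) (lam k))).prod = proj n d lam := by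
  classical
  set φ : TP n d →ₐ[ℚ] Module.End ℚ (TP n d) := Algebra.lmul ℚ (TP n d) with hφ
  have hφapp : ∀ (g f : TP n d) (w : Fin d → Fin n), (φ g) f w = g w * f w := by
    intro g f w; rfl
  -- aeval on the function algebra is pointwise evaluation
  have haev : ∀ (g : TP n d) (p : Polynomial ℚ),
      Polynomial.aeval g p = fun w => p.eval (g w) := by
    intro g p
    funext w
    have := (Polynomial.aeval_algHom_apply (Pi.evalAlgHom ℚ (fun _ => ℚ) w) g p).symm
    simpa only [Pi.evalAlgHom_apply, Polynomial.coe_aeval_eq_eval] using this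
  -- EU k k is multiplication by the content
  have hEU : ∀ k : Fin n, EU n d k k = φ (fun w => (content n d w k : ℚ)) := by
    intro k
    apply LinearMap.ext
    intro f
    funext w
    rw [hφapp]
    show (∑ p : Fin d, if w p = k then f (Function.update w p k) else 0) = _
    have : ∀ p : Fin d, (if w p = k then f (Function.update w p k) else 0)
        = (if w p = k then (1:ℚ) else 0) * f w := by
      intro p
      by_cases h : w p = k
      · subst h; simp [Function.update_eq_self]
      · simp [h]
    rw [Finset.sum_congr rfl (fun p _ => this p), ← Finset.sum_mul, Finset.sum_boole]
    simp [content]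
  -- binomOp of a multiplication operator
  set g : Fin n → TP n d := fun k w =>
    ((lam k).factorial : ℚ)⁻¹ * ((content n d w k : ℕ).descFactorial (lam k) : ℚ) with hg
  have hbin : ∀ k : Fin n, binomOp (EU n d k k) (lam k) = φ (g k) := by
    intro k
    rw [binomOp, hEU k, Polynomial.aeval_algHom_apply φ, haev]
    have hgk : g k = ((lam k).factorial : ℚ)⁻¹ •
        (fun w => Polynomial.eval ((content n d w k : ℚ)) (descPochhammer ℚ (lam k))) := by
      funext w
      simp [hg, descPochhammer_eval_eq_descFactorial ℚ (content n d w k) (lam k), smul_eq_mul]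
    rw [hgk]; exact ((φ.toLinearMap).map_smul _ _).symm
  -- assemble the product
  have : (List.ofFn (fun k : Fin n => binomOp (EU n d k k) (lam k))).prod
      = φ (∏ k, g k) := by
    have h1 : (fun k : Fin n => binomOp (EU n d k k) (lam k)) = fun k => φ (g k) := by
      funext k; exact hbin k
    rw [h1]
    rw [show (List.ofFn fun k => φ (g k)) = (List.ofFn g).map φ by rw [List.map_ofFn]; rfl]
    rw [← map_list_prod, List.prod_ofFn]
  rw [this]
  -- sums
  have hlamsum : ∑ k, lam k = d := (Finset.mem_filter.mp hlam).2
  -- pointwise identification with the projection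
  apply LinearMap.ext
  intro f
  funext w
  rw [hφapp]
  have hcsum : ∑ k, content n d w k = d := by
    have := Finset.card_eq_sum_card_fiberwise
      (f := w) (s := Finset.univ) (t := Finset.univ) (fun x _ => Finset.mem_univ _)
    simpa [content] using this.symm
  have hprodapp : (∏ k, g k) w = ∏ k, g k w := by
    simp [Finset.prod_apply]
  show (∏ k, g k) w * f w = proj n d lam f w
  rw [hprodapp]
  by_cases hc : content n d w = lam
  · have : ∀ k : Fin n, g k w = 1 := by
      intro k
      simp only [hg, hc, Nat.descFactorial_self]
      rw [inv_mul_cancel₀]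
      exact_mod_cast (Nat.factorial_ne_zero (lam k))
    simp [Finset.prod_congr rfl (fun k _ => this k), proj, hc]
  · have hex : ∃ k : Fin n, content n d w k < lam k := by
      by_contra h
      push_neg at h
      apply hc
      funext k
      exact ((Finset.sum_eq_sum_iff_of_le (fun i _ => h i)).mp
        (by rw [hlamsum, hcsum])) k (Finset.mem_univ k) |>.symm
    obtain ⟨k0, hk0⟩ := hex
    have : g k0 w = 0 := by
      simp [hg, Nat.descFactorial_eq_zero_iff_lt.mpr hk0]
    rw [Finset.prod_eq_zero (Finset.mem_univ k0) this]
    simp [proj, hc]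
end

section
/- The number of pairs (A, C) ∈ ℕ^{Φ⁺} × ℕ^{Φ⁺} together with λ ∈ Λ(n,d) satisfying χ(e_A f_C) ⪯ λ (componentwise) equals binom(n² + d - 1, d), the dimension of S(n,d). -/
open scoped BigOperators

/-- the set of positive roots `Φ⁺` of `gl_n`, identified with pairs `(i,j)`, `i < j` -/
abbrev PhiPos (n : ℕ) : Type := {p : Fin n × Fin n // p.1 < p.2}

/-!
Subtracting `χ(e_A f_C)` from `λ` turns the triples `(A, C, λ)` into triples `(A, C, μ)` with
`μ ∈ ℕ^n` and `|A| + |C| + |μ| = d`, i.e. into weak compositions of `d` into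
`|Φ⁺| + |Φ⁺| + n = n²` parts, of which there are `binom(n² + d - 1, d)`.
-/

open Finset

lemma card_subtype_sum_eq {ι : Type*} [Fintype ι] (d : ℕ) :
    Nat.card {f : ι → ℕ // ∑ i, f i = d} = (Fintype.card ι + d - 1).choose d := by
  classical
  rw [Nat.card_congr (Sym.equivNatSumOfFintype ι d).symm, Nat.card_eq_fintype_card,
    Sym.card_sym_eq_choose]

def subtypeLeEquivSubtypeSumAdd {X κ : Type*} [Fintype κ] (χ : X → κ → ℕ) (d : ℕ) :
    {t : X × (κ → ℕ) // ∑ k, t.2 k = d ∧ χ t.1 ≤ t.2} ≃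
      {t : X × (κ → ℕ) // ∑ k, χ t.1 k + ∑ k, t.2 k = d} where
  toFun t := ⟨(t.1.1, t.1.2 - χ t.1.1), by
    obtain ⟨⟨x, l⟩, hsum, hle⟩ := t
    simp only [Pi.sub_apply]
    rw [sum_tsub_distrib _ fun k _ => hle k, ← hsum]
    exact Nat.add_sub_cancel' (sum_le_sum fun k _ => hle k)⟩
  invFun t := ⟨(t.1.1, χ t.1.1 + t.1.2), by simpa [sum_add_distrib] using t.2,
    fun k => Nat.le_add_right _ _⟩
  left_inv t := Subtype.ext <| Prod.ext rfl <| funext fun k => Nat.add_sub_cancel' (t.2.2 k)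
  right_inv t := Subtype.ext <| Prod.ext rfl <| funext fun k => Nat.add_sub_cancel_left _ _

lemma card_phiPos (n : ℕ) : Fintype.card (PhiPos n) = n.choose 2 := by
  rw [Fintype.card_subtype, Fintype.card_product_filter_lt, Fintype.card_fin]

lemma two_mul_choose_two_add_self (n : ℕ) : 2 * n.choose 2 + n = n ^ 2 := by
  rw [Nat.choose_two_right, Nat.mul_div_cancel' (Nat.even_mul_pred_self n).two_dvd]
  cases n <;> simp; ring

section

variable {n : ℕ}

/-- The weight `χ(e_A f_C) = Σ_{i<j} (a_{ij} + c_{ij}) ε_j`. -/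
def rootWeight (A C : PhiPos n → ℕ) (k : Fin n) : ℕ :=
  ∑ p : PhiPos n, if p.1.2 = k then A p + C p else 0

lemma sum_rootWeight (A C : PhiPos n → ℕ) :
    ∑ k, rootWeight A C k = ∑ p, A p + ∑ p, C p := by
  unfold rootWeight
  rw [sum_comm, ← sum_add_distrib]
  simp

def sumRootWeightAddEquivSubtypeSum (d : ℕ) :
    {t : ((PhiPos n → ℕ) × (PhiPos n → ℕ)) × (Fin n → ℕ) //
        ∑ k, rootWeight t.1.1 t.1.2 k + ∑ k, t.2 k = d} ≃
      {f : (PhiPos n ⊕ PhiPos n) ⊕ Fin n → ℕ // ∑ i, f i = d} :=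
  ((Equiv.prodCongr (Equiv.sumArrowEquivProdArrow _ _ _).symm (Equiv.refl _)).trans
      (Equiv.sumArrowEquivProdArrow _ _ _).symm).subtypeEquiv fun ⟨⟨A, C⟩, μ⟩ => by
    simp [sum_rootWeight, Fintype.sum_sum_type]

end

/-- The number of triples `(A, C, λ)` with `A, C ∈ ℕ^{Φ⁺}`, `λ ∈ Λ(n,d)` and
`χ(e_A f_C) ⪯ λ` componentwise (where `χ(e_A f_C) = Σ_{i<j}(a_{ij}+c_{ij})ε_j`)
equals `binom(n²+d-1, d) = dim S(n,d)`. -/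
theorem count_basis_B1 (n d : ℕ) :
    Nat.card {t : ((PhiPos n → ℕ) × (PhiPos n → ℕ)) × (Fin n → ℕ) //
        (∑ k, t.2 k = d) ∧
        ∀ k : Fin n,
          (∑ p : PhiPos n, if p.1.2 = k then t.1.1 p + t.1.2 p else 0) ≤ t.2 k} =
      Nat.choose (n ^ 2 + d - 1) d := by
  have hparts : Fintype.card ((PhiPos n ⊕ PhiPos n) ⊕ Fin n) = n ^ 2 := by
    rw [Fintype.card_sum, Fintype.card_sum, card_phiPos, Fintype.card_fin, ← two_mul,
      two_mul_choose_two_add_self]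
  rw [← hparts, ← card_subtype_sum_eq]
  exact Nat.card_congr <|
    (subtypeLeEquivSubtypeSumAdd
      (fun x : (PhiPos n → ℕ) × (PhiPos n → ℕ) => rootWeight x.1 x.2) d).trans
      (sumRootWeightAddEquivSubtypeSum d)
end

section
/- In End((ℚ²)^{⊗d}) with e, f the sl_2-operators and 1_λ (λ = (b_1, b_2), b_1 + b_2 = d) the weight projections, for a, c ∈ ℕ and s := a + b_1 + c - d ≥ 1, the following holds: e^{(a)} 1_λ f^{(c)} = Σ_{k=s}^{min(a,c)} (-1)^{k-s} binom(k-1, s-1) binom(b_1+k, k) e^{(a-k)} 1_{λ+kα} f^{(c-k)}, where α = (1,-1) and 1_μ = 0 if μ ∉ ℕ². -/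
open scoped BigOperators

open Finset

/-! ### auxiliary definitions -/

/-- the set of places where the word `w` has letter `i` -/
def plcs (d : ℕ) (i : Fin 2) (w : Fin d → Fin 2) : Finset (Fin d) :=
  Finset.univ.filter (fun p => w p = i)

/-- the word whose zero set is `V` -/
def wrd (d : ℕ) (V : Finset (Fin d)) : Fin d → Fin 2 := fun p => if p ∈ V then 0 else 1

/-- update all places in `S` to the letter `v` -/
def updAll (d : ℕ) (w : Fin d → Fin 2) (S : Finset (Fin d)) (v : Fin 2) : Fin d → Fin 2 :=
  fun p => if p ∈ S then v else w p

lemma fin2_cases (x : Fin 2) : x = 0 ∨ x = 1 := by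
  revert x; decide

lemma plcs_one_eq_compl (d : ℕ) (u : Fin d → Fin 2) : plcs d 1 u = (plcs d 0 u)ᶜ := by
  ext p
  simp only [plcs, mem_filter, mem_univ, true_and, mem_compl]
  rcases fin2_cases (u p) with h | h <;> simp [h]

lemma card_plcs_one (d : ℕ) (u : Fin d → Fin 2) :
    (plcs d 1 u).card = d - (plcs d 0 u).card := by
  rw [plcs_one_eq_compl, Finset.card_compl, Fintype.card_fin]

lemma card_plcs_le (d : ℕ) (i : Fin 2) (u : Fin d → Fin 2) : (plcs d i u).card ≤ d := by
  refine le_trans (Finset.card_le_univ _) ?_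
  simp

lemma plcs_zero_updAll (d : ℕ) (w : Fin d → Fin 2) (S : Finset (Fin d)) :
    plcs d 0 (updAll d w S 1) = plcs d 0 w \ S := by
  ext p
  simp only [plcs, mem_filter, mem_univ, true_and, mem_sdiff]
  by_cases h : p ∈ S <;> simp [h, updAll]

lemma updAll_updAll (d : ℕ) (w : Fin d → Fin 2) (S T : Finset (Fin d)) :
    updAll d (updAll d w S 1) T 0 = wrd d ((plcs d 0 w \ S) ∪ T) := by
  funext p
  simp only [updAll, wrd, plcs, mem_union, mem_sdiff, mem_filter, mem_univ, true_and]
  by_cases hT : p ∈ T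
  · simp [hT]
  · by_cases hS : p ∈ S
    · simp [hT, hS]
    · rcases fin2_cases (w p) with h | h <;> simp [hT, hS, h]

lemma content_eq_iff (d : ℕ) (u : Fin d → Fin 2) (x y : ℕ) :
    content 2 d u = ![x, y] ↔ (plcs d 0 u).card = x ∧ (plcs d 1 u).card = y := by
  constructor
  · intro h
    exact ⟨congrFun h 0, congrFun h 1⟩
  · rintro ⟨h0, h1⟩
    funext k
    rcases fin2_cases k with hk | hk <;> subst hk
    · exact h0
    · exact h1

/-! ### divided power formula -/

lemma EU_apply (d : ℕ) (i j : Fin 2) (f : TP 2 d) (w : Fin d → Fin 2) :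
    EU 2 d i j f w = ∑ p ∈ plcs d i w, f (Function.update w p j) := by
  rw [plcs, Finset.sum_filter]
  rfl

lemma double_count (d : ℕ) (Z : Finset (Fin d)) (m : ℕ) (G : Finset (Fin d) → ℚ) :
    ∑ p ∈ Z, ∑ S ∈ (Z.erase p).powersetCard m, G (insert p S)
      = ((m : ℚ) + 1) * ∑ T ∈ Z.powersetCard (m + 1), G T := by
  have h1 : ∀ p : Fin d, (Z.erase p).powersetCard m
      = (Z.powersetCard m).filter (fun S => p ∉ S) := by
    intro p
    ext S
    simp only [mem_powersetCard, mem_filter, Finset.subset_erase]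
    tauto
  have lhs_eq : ∑ p ∈ Z, ∑ S ∈ (Z.erase p).powersetCard m, G (insert p S)
      = ∑ x ∈ (Z ×ˢ Z.powersetCard m).filter (fun x => x.1 ∉ x.2), G (insert x.1 x.2) := by
    rw [Finset.sum_filter, Finset.sum_product]
    refine Finset.sum_congr rfl fun p _ => ?_
    rw [h1, Finset.sum_filter]
  have rhs_eq : ((m : ℚ) + 1) * ∑ T ∈ Z.powersetCard (m + 1), G T
      = ∑ y ∈ (Z.powersetCard (m + 1) ×ˢ Z).filter (fun y => y.2 ∈ y.1), G y.1 := by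
    rw [Finset.mul_sum, Finset.sum_filter, Finset.sum_product]
    refine Finset.sum_congr rfl fun T hT => ?_
    rw [mem_powersetCard] at hT
    have heq : ∑ p ∈ Z, (if p ∈ T then G (T, p).1 else 0) = ∑ p ∈ Z, (if p ∈ T then G T else 0) :=
      rfl
    rw [heq, Finset.sum_ite_mem, Finset.inter_eq_right.mpr hT.1, Finset.sum_const, hT.2,
      nsmul_eq_mul]
    push_cast
    ring
  rw [lhs_eq, rhs_eq]
  apply Finset.sum_nbij' (i := fun x => (insert x.1 x.2, x.1)) (j := fun y => (y.2, y.1.erase y.2))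
  · intro x hx
    rw [mem_filter, mem_product] at hx
    obtain ⟨⟨hp, hS⟩, hpS⟩ := hx
    rw [mem_powersetCard] at hS
    rw [mem_filter, mem_product, mem_powersetCard]
    refine ⟨⟨⟨?_, ?_⟩, hp⟩, Finset.mem_insert_self _ _⟩
    · exact Finset.insert_subset hp hS.1
    · rw [Finset.card_insert_of_notMem hpS, hS.2]
  · intro y hy
    rw [mem_filter, mem_product] at hy
    obtain ⟨⟨hT, hp⟩, hpT⟩ := hy
    rw [mem_powersetCard] at hT
    rw [mem_filter, mem_product, mem_powersetCard]
    refine ⟨⟨hp, ?_, ?_⟩, Finset.notMem_erase _ _⟩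
    · exact fun q hq => hT.1 (Finset.mem_of_mem_erase hq)
    · rw [Finset.card_erase_of_mem hpT, hT.2]
      omega
  · intro x hx
    rw [mem_filter, mem_product] at hx
    rw [Prod.ext_iff]
    exact ⟨rfl, by rw [Finset.erase_insert hx.2]⟩
  · intro y hy
    rw [mem_filter, mem_product] at hy
    rw [Prod.ext_iff]
    exact ⟨by rw [Finset.insert_erase hy.2], rfl⟩
  · intro x hx
    rfl

lemma EU_pow_apply (d : ℕ) (i j : Fin 2) (hij : j ≠ i) (m : ℕ) (f : TP 2 d) (w : Fin d → Fin 2) :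
    ((EU 2 d i j) ^ m) f w
      = (m.factorial : ℚ) * ∑ S ∈ (plcs d i w).powersetCard m, f (updAll d w S j) := by
  induction m generalizing f w with
  | zero =>
    simp only [pow_zero, Module.End.one_apply, Nat.factorial_zero, Nat.cast_one, one_mul,
      Finset.powersetCard_zero, Finset.sum_singleton]
    congr 1
  | succ m ih =>
    rw [pow_succ']
    rw [Module.End.mul_apply]
    rw [EU_apply]
    have step : ∀ p ∈ plcs d i w, ((EU 2 d i j) ^ m) f (Function.update w p j)
        = (m.factorial : ℚ) * ∑ S ∈ ((plcs d i w).erase p).powersetCard m,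
            f (updAll d w (insert p S) j) := by
      intro p hp
      rw [ih]
      congr 1
      have hplcs : plcs d i (Function.update w p j) = (plcs d i w).erase p := by
        ext q
        simp only [plcs, mem_filter, mem_univ, true_and, Finset.mem_erase,
          Function.update_apply]
        by_cases hq : q = p
        · subst hq
          simp [hij]
        · simp [hq]
      rw [hplcs]
      refine Finset.sum_congr rfl fun S hS => ?_
      congr 1
      funext q
      simp only [updAll, Function.update_apply, Finset.mem_insert]
      by_cases hqS : q ∈ S
      · simp [hqS]
      · by_cases hqp : q = p <;> simp [hqS, hqp]
    rw [Finset.sum_congr rfl step, ← Finset.mul_sum,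
      double_count d (plcs d i w) m (fun U => f (updAll d w U j))]
    rw [Nat.factorial_succ]
    push_cast
    ring

lemma dpow_EU_apply (d : ℕ) (i j : Fin 2) (hij : j ≠ i) (m : ℕ) (f : TP 2 d)
    (w : Fin d → Fin 2) :
    dpow (EU 2 d i j) m f w = ∑ S ∈ (plcs d i w).powersetCard m, f (updAll d w S j) := by
  rw [dpow, LinearMap.smul_apply, Pi.smul_apply, smul_eq_mul, EU_pow_apply d i j hij, ← mul_assoc,
    inv_mul_cancel₀ (by exact_mod_cast m.factorial_ne_zero), one_mul]

lemma proj_apply (n d : ℕ) (μ : Fin n → ℕ) (f : TP n d) (w : Fin d → Fin n) :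
    proj n d μ f w = if content n d w = μ then f w else 0 := rfl

lemma triple_eval (d a c : ℕ) (x y : ℕ) (g : TP 2 d) (w : Fin d → Fin 2) :
    (dpow (EU 2 d 0 1) a * proj 2 d ![x, y] * dpow (EU 2 d 1 0) c) g w
    = ∑ S ∈ (plcs d 0 w).powersetCard a,
        if content 2 d (updAll d w S 1) = ![x, y] then
          ∑ T ∈ ((plcs d 0 w \ S)ᶜ).powersetCard c, g (wrd d ((plcs d 0 w \ S) ∪ T))
        else 0 := by
  rw [Module.End.mul_apply, Module.End.mul_apply,
    dpow_EU_apply d 0 1 (by decide) a _ w]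
  refine Finset.sum_congr rfl fun S hS => ?_
  rw [proj_apply]
  by_cases h : content 2 d (updAll d w S 1) = ![x, y]
  · rw [if_pos h, if_pos h, dpow_EU_apply d 1 0 (by decide) c]
    rw [plcs_one_eq_compl, plcs_zero_updAll]
    refine Finset.sum_congr rfl fun T hT => ?_
    rw [updAll_updAll]
  · rw [if_neg h, if_neg h]

/-- the finset of `S`'s contributing to the matrix entry at `V` -/
def cntS (d : ℕ) (Z V : Finset (Fin d)) (t : ℕ) : Finset (Finset (Fin d)) :=
  (Z.powersetCard t).filter (fun S => Z \ S ⊆ V)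

lemma sdiff_subset_iff_aux (d : ℕ) (Z V S : Finset (Fin d)) (hS : S ⊆ Z) :
    Z \ S ⊆ V ↔ Z \ V ⊆ S := by
  constructor
  · intro h p hp
    rw [Finset.mem_sdiff] at hp
    by_contra hpS
    exact hp.2 (h (Finset.mem_sdiff.mpr ⟨hp.1, hpS⟩))
  · intro h p hp
    rw [Finset.mem_sdiff] at hp
    by_contra hpV
    exact hp.2 (h (Finset.mem_sdiff.mpr ⟨hp.1, hpV⟩))

lemma cnt_card (d : ℕ) (Z V : Finset (Fin d)) (t : ℕ) :
    (cntS d Z V t).card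
      = if (Z \ V).card ≤ t then (Z ∩ V).card.choose (t - (Z \ V).card) else 0 := by
  split_ifs with h
  · rw [← Finset.card_powersetCard]
    apply Finset.card_bij' (i := fun S _ => S \ (Z \ V)) (j := fun S' _ => S' ∪ (Z \ V))
    · intro S hS
      rw [cntS, mem_filter, mem_powersetCard] at hS
      obtain ⟨⟨hSZ, hScard⟩, hSV⟩ := hS
      have hsub : Z \ V ⊆ S := (sdiff_subset_iff_aux d Z V S hSZ).mp hSV
      rw [mem_powersetCard]
      constructor
      · intro p hp
        rw [Finset.mem_sdiff, Finset.mem_sdiff] at hp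
        rw [Finset.mem_inter]
        refine ⟨hSZ hp.1, ?_⟩
        by_contra hpV
        exact hp.2 ⟨hSZ hp.1, hpV⟩
      · rw [Finset.card_sdiff_of_subset hsub, hScard]
    · intro S' hS'
      rw [mem_powersetCard] at hS'
      obtain ⟨hS'ZV, hS'card⟩ := hS'
      rw [cntS, mem_filter, mem_powersetCard]
      have hsub : S' ∪ (Z \ V) ⊆ Z := by
        apply Finset.union_subset
        · exact hS'ZV.trans Finset.inter_subset_left
        · exact Finset.sdiff_subset
      have hdisj : Disjoint S' (Z \ V) := by
        apply Finset.disjoint_left.mpr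
        intro p hp hp'
        rw [Finset.mem_sdiff] at hp'
        exact hp'.2 (Finset.mem_inter.mp (hS'ZV hp)).2
      refine ⟨⟨hsub, ?_⟩, ?_⟩
      · rw [Finset.card_union_of_disjoint hdisj, hS'card]
        omega
      · rw [sdiff_subset_iff_aux d Z V _ hsub]
        exact Finset.subset_union_right
    · intro S hS
      rw [cntS, mem_filter, mem_powersetCard] at hS
      have hsub : Z \ V ⊆ S := (sdiff_subset_iff_aux d Z V S hS.1.1).mp hS.2
      rw [Finset.sdiff_union_of_subset hsub]
    · intro S' hS'
      rw [mem_powersetCard] at hS'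
      have hdisj : Disjoint S' (Z \ V) := by
        apply Finset.disjoint_left.mpr
        intro p hp hp'
        rw [Finset.mem_sdiff] at hp'
        exact hp'.2 (Finset.mem_inter.mp (hS'.1 hp)).2
      rw [Finset.union_sdiff_cancel_right hdisj]
  · rw [Finset.card_eq_zero, Finset.eq_empty_iff_forall_notMem]
    intro S hS
    rw [cntS, mem_filter, mem_powersetCard] at hS
    have hsub : Z \ V ⊆ S := (sdiff_subset_iff_aux d Z V S hS.1.1).mp hS.2
    have := Finset.card_le_card hsub
    omega

lemma inner_reindex (d : ℕ) (A : Finset (Fin d)) (r : ℕ) (G : Finset (Fin d) → ℚ) :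
    ∑ T ∈ (Aᶜ).powersetCard r, G (A ∪ T)
    = ∑ V ∈ ((Finset.univ : Finset (Fin d)).powersetCard (A.card + r)).filter (fun V => A ⊆ V),
        G V := by
  apply Finset.sum_nbij' (i := fun T => A ∪ T) (j := fun V => V \ A)
  · intro T hT
    rw [mem_powersetCard] at hT
    have hdisj : Disjoint A T := by
      apply Finset.disjoint_left.mpr
      intro p hp hp'
      exact (Finset.mem_compl.mp (hT.1 hp')) hp
    rw [mem_filter, mem_powersetCard]
    exact ⟨⟨Finset.subset_univ _, by rw [Finset.card_union_of_disjoint hdisj, hT.2]⟩,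
      Finset.subset_union_left⟩
  · intro V hV
    rw [mem_filter, mem_powersetCard] at hV
    obtain ⟨⟨-, hVcard⟩, hAV⟩ := hV
    rw [mem_powersetCard]
    constructor
    · intro p hp
      rw [Finset.mem_sdiff] at hp
      exact Finset.mem_compl.mpr hp.2
    · rw [Finset.card_sdiff_of_subset hAV, hVcard]
      omega
  · intro T hT
    rw [mem_powersetCard] at hT
    have hdisj : Disjoint A T := by
      apply Finset.disjoint_left.mpr
      intro p hp hp'
      exact (Finset.mem_compl.mp (hT.1 hp')) hp
    rw [Finset.union_sdiff_cancel_left hdisj]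
  · intro V hV
    rw [mem_filter, mem_powersetCard] at hV
    rw [Finset.union_sdiff_of_subset hV.2]
  · intro T hT
    rfl

lemma sumV (d : ℕ) (Z : Finset (Fin d)) (t r u : ℕ) (ht : t ≤ Z.card)
    (hu : Z.card - t + r = u) (G : Finset (Fin d) → ℚ) :
    ∑ S ∈ Z.powersetCard t, ∑ T ∈ ((Z \ S)ᶜ).powersetCard r, G ((Z \ S) ∪ T)
    = ∑ V ∈ (Finset.univ : Finset (Fin d)).powersetCard u, ((cntS d Z V t).card : ℚ) * G V := by
  have step : ∀ S ∈ Z.powersetCard t,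
      ∑ T ∈ ((Z \ S)ᶜ).powersetCard r, G ((Z \ S) ∪ T)
      = ∑ V ∈ (Finset.univ : Finset (Fin d)).powersetCard u,
          if Z \ S ⊆ V then G V else 0 := by
    intro S hS
    rw [mem_powersetCard] at hS
    rw [inner_reindex, Finset.sum_filter]
    have hcard : (Z \ S).card + r = u := by
      rw [Finset.card_sdiff_of_subset hS.1, hS.2]
      omega
    rw [hcard]
  rw [Finset.sum_congr rfl step, Finset.sum_comm]
  refine Finset.sum_congr rfl fun V hV => ?_
  rw [← Finset.sum_filter]
  rw [Finset.sum_const, nsmul_eq_mul]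
  rfl

lemma altS0 (n : ℕ) (hn : n ≠ 0) :
    ∑ t ∈ range (n + 1), (-1 : ℚ) ^ t * (n.choose t : ℚ) = 0 := by
  have h := Int.alternating_sum_range_choose_of_ne hn
  have h2 : ((∑ i ∈ range (n + 1), ((-1 : ℤ) ^ i * n.choose i) : ℤ) : ℚ) = 0 := by
    rw [h]; norm_num
  push_cast at h2
  convert h2 using 2

lemma altS1 (r j : ℕ) (h : r < j) :
    ∑ m ∈ Icc r j, (-1 : ℚ) ^ (m - r) * (m.choose r : ℚ) * (j.choose m : ℚ) = 0 := by
  have hre : ∑ m ∈ Icc r j, (-1 : ℚ) ^ (m - r) * (m.choose r : ℚ) * (j.choose m : ℚ)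
      = ∑ t ∈ range (j - r + 1), (-1 : ℚ) ^ t * ((r + t).choose r : ℚ) * (j.choose (r + t) : ℚ) := by
    apply Finset.sum_nbij' (i := fun m => m - r) (j := fun t => r + t)
    · intro m hm; rw [mem_Icc] at hm; rw [mem_range]; omega
    · intro t ht; rw [mem_range] at ht; rw [mem_Icc]; omega
    · intro m hm; rw [mem_Icc] at hm; omega
    · intro t ht; omega
    · intro m hm; rw [mem_Icc] at hm
      rw [show r + (m - r) = m by omega]
  rw [hre]
  have hterm : ∀ t ∈ range (j - r + 1),
      (-1 : ℚ) ^ t * ((r + t).choose r : ℚ) * (j.choose (r + t) : ℚ)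
      = (j.choose r : ℚ) * ((-1 : ℚ) ^ t * ((j - r).choose t : ℚ)) := by
    intro t ht
    rw [mem_range] at ht
    have hn : j.choose (r + t) * (r + t).choose r = j.choose r * (j - r).choose t := by
      have := Nat.choose_mul (n := j) (k := r + t) (s := r) (by omega)
      simpa using this
    have hn' : (j.choose (r + t) : ℚ) * ((r + t).choose r : ℚ)
        = (j.choose r : ℚ) * ((j - r).choose t : ℚ) := by exact_mod_cast congrArg Nat.cast hn
    linear_combination (-1 : ℚ) ^ t * hn'
  rw [Finset.sum_congr rfl hterm, ← Finset.mul_sum, altS0 _ (by omega), mul_zero]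

lemma altS2 (s j : ℕ) (hs1 : 1 ≤ s) (hsj : s ≤ j) :
    ∑ k ∈ Icc s j, (-1 : ℚ) ^ (k - s) * ((k - 1).choose (s - 1) : ℚ) * (j.choose k : ℚ) = 1 := by
  induction j with
  | zero => omega
  | succ j ih =>
    rcases Nat.eq_or_lt_of_le hsj with he | hlt
    · rw [← he, Icc_self, Finset.sum_singleton]
      simp [Nat.choose_self]
    · have hsj' : s ≤ j := by omega
      have pascal : ∀ k ∈ Icc s (j + 1),
          (-1 : ℚ) ^ (k - s) * ((k - 1).choose (s - 1) : ℚ) * ((j + 1).choose k : ℚ)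
          = (-1 : ℚ) ^ (k - s) * ((k - 1).choose (s - 1) : ℚ) * (j.choose (k - 1) : ℚ)
            + (-1 : ℚ) ^ (k - s) * ((k - 1).choose (s - 1) : ℚ) * (j.choose k : ℚ) := by
        intro k hk
        rw [mem_Icc] at hk
        have h1 : (j + 1).choose k = j.choose (k - 1) + j.choose k := by
          have h0 := Nat.choose_succ_succ j (k - 1)
          have h1 : (k - 1).succ = k := by omega
          rw [h1] at h0
          exact h0
        rw [h1]; push_cast; ring
      rw [Finset.sum_congr rfl pascal, Finset.sum_add_distrib]
      have hA : ∑ k ∈ Icc s (j + 1),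
          (-1 : ℚ) ^ (k - s) * ((k - 1).choose (s - 1) : ℚ) * (j.choose (k - 1) : ℚ) = 0 := by
        have hre : ∑ k ∈ Icc s (j + 1),
            (-1 : ℚ) ^ (k - s) * ((k - 1).choose (s - 1) : ℚ) * (j.choose (k - 1) : ℚ)
            = ∑ m ∈ Icc (s - 1) j, (-1 : ℚ) ^ (m - (s - 1)) * (m.choose (s - 1) : ℚ)
              * (j.choose m : ℚ) := by
          apply Finset.sum_nbij' (i := fun k => k - 1) (j := fun m => m + 1)
          · intro k hk; rw [mem_Icc] at hk; rw [mem_Icc]; omega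
          · intro m hm; rw [mem_Icc] at hm; rw [mem_Icc]; omega
          · intro k hk; rw [mem_Icc] at hk; omega
          · intro m hm; omega
          · intro k hk; rw [mem_Icc] at hk
            rw [show k - 1 - (s - 1) = k - s by omega]
        rw [hre]
        exact altS1 (s - 1) j (by omega)
      have hB : ∑ k ∈ Icc s (j + 1),
          (-1 : ℚ) ^ (k - s) * ((k - 1).choose (s - 1) : ℚ) * (j.choose k : ℚ) = 1 := by
        rw [Finset.sum_Icc_succ_top (by omega : s ≤ j + 1)]
        rw [Nat.choose_eq_zero_of_lt (by omega : j < j + 1)]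
        rw [ih hsj']
        norm_num
      rw [hA, hB]; norm_num

lemma altS3 (b s j mac : ℕ) (h1 : 1 ≤ s) (h2 : s ≤ j) (h3 : j ≤ mac) :
    ∑ k ∈ Icc s mac, (-1 : ℚ) ^ (k - s) * ((k - 1).choose (s - 1) : ℚ) * ((b + k).choose k : ℚ)
      * (if k ≤ j then ((b + j).choose (j - k) : ℚ) else 0)
    = ((b + j).choose j : ℚ) := by
  rw [← Finset.sum_subset (Finset.Icc_subset_Icc_right h3 : Icc s j ⊆ Icc s mac)
    (by intro x hx hx'
        rw [mem_Icc] at hx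
        rw [mem_Icc] at hx'
        rw [if_neg (by omega), mul_zero])]
  have hterm : ∀ k ∈ Icc s j,
      (-1 : ℚ) ^ (k - s) * ((k - 1).choose (s - 1) : ℚ) * ((b + k).choose k : ℚ)
        * (if k ≤ j then ((b + j).choose (j - k) : ℚ) else 0)
      = ((b + j).choose j : ℚ) * ((-1 : ℚ) ^ (k - s) * ((k - 1).choose (s - 1) : ℚ)
          * (j.choose k : ℚ)) := by
    intro k hk
    rw [mem_Icc] at hk
    rw [if_pos hk.2]
    have hn : (b + j).choose (b + k) * (b + k).choose b = (b + j).choose b * j.choose k := by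
      have := Nat.choose_mul (n := b + j) (k := b + k) (s := b) (by omega)
      simpa using this
    rw [show (b + j).choose (b + k) = (b + j).choose (j - k) by
          rw [← Nat.choose_symm (by omega : b + k ≤ b + j), show b + j - (b + k) = j - k by omega],
        show (b + k).choose b = (b + k).choose k by
          rw [← Nat.choose_symm (by omega : b ≤ b + k), show b + k - b = k by omega],
        show (b + j).choose b = (b + j).choose j by
          rw [← Nat.choose_symm (by omega : b ≤ b + j), show b + j - b = j by omega]] at hn
    have hn' : ((b + j).choose (j - k) : ℚ) * ((b + k).choose k : ℚ)
        = ((b + j).choose j : ℚ) * (j.choose k : ℚ) := by exact_mod_cast congrArg Nat.cast hn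
    linear_combination ((-1 : ℚ) ^ (k - s) * ((k - 1).choose (s - 1) : ℚ)) * hn'
  rw [Finset.sum_congr rfl hterm, ← Finset.mul_sum, altS2 s j h1 h2, mul_one]

lemma keyV (d a c b1 b2 : ℕ) (hb : b1 + b2 = d) (hs : d < a + b1 + c)
    (Z V : Finset (Fin d)) (hZ : Z.card = a + b1) (hVc : V.card = b1 + c) :
    ((cntS d Z V a).card : ℚ)
    = ∑ k ∈ Finset.Icc (a + b1 + c - d) (min a c),
        (-1 : ℚ) ^ (k - (a + b1 + c - d)) * ((k - 1).choose (a + b1 + c - d - 1) : ℚ)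
          * ((b1 + k).choose k : ℚ) * ((cntS d Z V (a - k)).card : ℚ) := by
  set s := a + b1 + c - d with hs_def
  set i := (Z ∩ V).card with hi_def
  set m := (Z \ V).card with hm_def
  have hmi : m + i = Z.card := Finset.card_sdiff_add_card_inter Z V
  have huni : (Z ∪ V).card + i = Z.card + V.card := Finset.card_union_add_card_inter Z V
  have hud : (Z ∪ V).card ≤ d := by
    refine le_trans (Finset.card_le_univ _) ?_
    simp
  set j := a - m with hj_def
  have hjs : s ≤ j := by omega
  have hjm : j ≤ min a c := by
    have : i ≤ V.card := Finset.card_le_card Finset.inter_subset_right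
    omega
  have hs1 : 1 ≤ s := by omega
  have hLHS : (cntS d Z V a).card = (b1 + j).choose j := by
    rw [cnt_card, if_pos (by omega : m ≤ a)]
    congr 1 <;> omega
  have hterm : ∀ k ∈ Finset.Icc s (min a c),
      ((cntS d Z V (a - k)).card : ℚ)
      = if k ≤ j then ((b1 + j).choose (j - k) : ℚ) else 0 := by
    intro k hk
    rw [Finset.mem_Icc] at hk
    rw [cnt_card]
    split_ifs with h1 h2 h2
    · congr 2 <;> omega
    · exfalso; omega
    · exfalso; omega
    · rfl
  rw [hLHS]
  rw [show (∑ k ∈ Finset.Icc s (min a c),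
        (-1 : ℚ) ^ (k - s) * ((k - 1).choose (s - 1) : ℚ)
          * ((b1 + k).choose k : ℚ) * ((cntS d Z V (a - k)).card : ℚ))
      = ∑ k ∈ Finset.Icc s (min a c),
        (-1 : ℚ) ^ (k - s) * ((k - 1).choose (s - 1) : ℚ) * ((b1 + k).choose k : ℚ)
          * (if k ≤ j then ((b1 + j).choose (j - k) : ℚ) else 0) from
    Finset.sum_congr rfl fun k hk => by rw [hterm k hk]]
  rw [altS3 b1 s j (min a c) hs1 hjs hjm]

/-- The reduction formula
`e^{(a)} 1_λ f^{(c)} = Σ_{k=s}^{min(a,c)} (-1)^{k-s} binom(k-1,s-1) binom(b₁+k,k)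
e^{(a-k)} 1_{λ+kα} f^{(c-k)}` in `End((ℚ²)^{⊗d})`, where `λ = (b₁,b₂)` with `b₁+b₂ = d`,
`α = (1,-1)`, `s = a+b₁+c-d ≥ 1`, and `1_μ = 0` if `μ ∉ ℕ²` (which is automatic here
since for `k > b₂` the projection onto content `(b₁+k, b₂∸k)` vanishes). -/
theorem reduction_formula_idempotent (d a c b1 b2 : ℕ) (hb : b1 + b2 = d)
    (hs : d < a + b1 + c) :
    dpow (EU 2 d 0 1) a * proj 2 d ![b1, b2] * dpow (EU 2 d 1 0) c =
      ∑ k ∈ Finset.Icc (a + b1 + c - d) (min a c),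
        (((-1 : ℚ) ^ (k - (a + b1 + c - d)) *
            (Nat.choose (k - 1) (a + b1 + c - d - 1)) * (Nat.choose (b1 + k) k)) •
          (dpow (EU 2 d 0 1) (a - k) * proj 2 d ![b1 + k, b2 - k] *
            dpow (EU 2 d 1 0) (c - k))) := by
  apply LinearMap.ext
  intro g
  funext w
  have hZd : (plcs d 0 w).card ≤ d := card_plcs_le d 0 w
  have hcond : ∀ (t x y : ℕ) (S : Finset (Fin d)), S ∈ (plcs d 0 w).powersetCard t →
      (content 2 d (updAll d w S 1) = ![x, y] ↔
        ((plcs d 0 w).card - t = x ∧ d - ((plcs d 0 w).card - t) = y)) := by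
    intro t x y S hS
    rw [mem_powersetCard] at hS
    rw [content_eq_iff, card_plcs_one, plcs_zero_updAll, Finset.card_sdiff_of_subset hS.1, hS.2]
  have hRt : ∀ k ∈ Finset.Icc (a + b1 + c - d) (min a c),
      ((((-1 : ℚ) ^ (k - (a + b1 + c - d)) *
            ((k - 1).choose (a + b1 + c - d - 1) : ℚ) * ((b1 + k).choose k : ℚ)) •
          (dpow (EU 2 d 0 1) (a - k) * proj 2 d ![b1 + k, b2 - k] *
            dpow (EU 2 d 1 0) (c - k))) g) w
      = ((-1 : ℚ) ^ (k - (a + b1 + c - d)) *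
            ((k - 1).choose (a + b1 + c - d - 1) : ℚ) * ((b1 + k).choose k : ℚ)) *
          ∑ S ∈ (plcs d 0 w).powersetCard (a - k),
            if content 2 d (updAll d w S 1) = ![b1 + k, b2 - k] then
              ∑ T ∈ ((plcs d 0 w \ S)ᶜ).powersetCard (c - k),
                g (wrd d ((plcs d 0 w \ S) ∪ T))
            else 0 := by
    intro k hk
    rw [LinearMap.smul_apply, Pi.smul_apply, smul_eq_mul, triple_eval]
  rw [LinearMap.sum_apply, Finset.sum_apply, triple_eval, Finset.sum_congr rfl hRt]
  by_cases hz : (plcs d 0 w).card = a + b1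
  · -- the weight-space case
    have e0 : ∀ k ∈ Finset.Icc (a + b1 + c - d) (min a c),
        (∑ S ∈ (plcs d 0 w).powersetCard (a - k),
            if content 2 d (updAll d w S 1) = ![b1 + k, b2 - k] then
              ∑ T ∈ ((plcs d 0 w \ S)ᶜ).powersetCard (c - k),
                g (wrd d ((plcs d 0 w \ S) ∪ T))
            else 0)
        = ∑ V ∈ (Finset.univ : Finset (Fin d)).powersetCard (b1 + c),
            ((cntS d (plcs d 0 w) V (a - k)).card : ℚ) * g (wrd d V) := by
      intro k hk
      rw [Finset.mem_Icc] at hk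
      have hka : k ≤ a := by omega
      have hkc : k ≤ c := by omega
      refine (Finset.sum_congr rfl fun S hS =>
        if_pos ((hcond (a - k) (b1 + k) (b2 - k) S hS).mpr ⟨by omega, by omega⟩)).trans ?_
      exact sumV d (plcs d 0 w) (a - k) (c - k) (b1 + c) (by omega) (by omega)
        (fun U => g (wrd d U))
    have L1 : (∑ S ∈ (plcs d 0 w).powersetCard a,
          if content 2 d (updAll d w S 1) = ![b1, b2] then
            ∑ T ∈ ((plcs d 0 w \ S)ᶜ).powersetCard c, g (wrd d ((plcs d 0 w \ S) ∪ T))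
          else 0)
        = ∑ S ∈ (plcs d 0 w).powersetCard a,
            ∑ T ∈ ((plcs d 0 w \ S)ᶜ).powersetCard c, g (wrd d ((plcs d 0 w \ S) ∪ T)) :=
      Finset.sum_congr rfl fun S hS =>
        if_pos ((hcond a b1 b2 S hS).mpr ⟨by omega, by omega⟩)
    have L2 : (∑ S ∈ (plcs d 0 w).powersetCard a,
          ∑ T ∈ ((plcs d 0 w \ S)ᶜ).powersetCard c, g (wrd d ((plcs d 0 w \ S) ∪ T)))
        = ∑ V ∈ (Finset.univ : Finset (Fin d)).powersetCard (b1 + c),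
            ((cntS d (plcs d 0 w) V a).card : ℚ) * g (wrd d V) :=
      sumV d (plcs d 0 w) a c (b1 + c) (by omega) (by omega) (fun U => g (wrd d U))
    have L3 : (∑ V ∈ (Finset.univ : Finset (Fin d)).powersetCard (b1 + c),
          ((cntS d (plcs d 0 w) V a).card : ℚ) * g (wrd d V))
        = ∑ V ∈ (Finset.univ : Finset (Fin d)).powersetCard (b1 + c),
            ∑ k ∈ Finset.Icc (a + b1 + c - d) (min a c),
              ((-1 : ℚ) ^ (k - (a + b1 + c - d)) *
                  ((k - 1).choose (a + b1 + c - d - 1) : ℚ) * ((b1 + k).choose k : ℚ)) *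
                (((cntS d (plcs d 0 w) V (a - k)).card : ℚ) * g (wrd d V)) := by
      refine Finset.sum_congr rfl fun V hV => ?_
      rw [keyV d a c b1 b2 hb hs (plcs d 0 w) V hz (mem_powersetCard.mp hV).2,
        Finset.sum_mul]
      exact Finset.sum_congr rfl fun k _ => by ring
    have R1 : (∑ V ∈ (Finset.univ : Finset (Fin d)).powersetCard (b1 + c),
          ∑ k ∈ Finset.Icc (a + b1 + c - d) (min a c),
            ((-1 : ℚ) ^ (k - (a + b1 + c - d)) *
                ((k - 1).choose (a + b1 + c - d - 1) : ℚ) * ((b1 + k).choose k : ℚ)) *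
              (((cntS d (plcs d 0 w) V (a - k)).card : ℚ) * g (wrd d V)))
        = ∑ k ∈ Finset.Icc (a + b1 + c - d) (min a c),
            ∑ V ∈ (Finset.univ : Finset (Fin d)).powersetCard (b1 + c),
              ((-1 : ℚ) ^ (k - (a + b1 + c - d)) *
                  ((k - 1).choose (a + b1 + c - d - 1) : ℚ) * ((b1 + k).choose k : ℚ)) *
                (((cntS d (plcs d 0 w) V (a - k)).card : ℚ) * g (wrd d V)) :=
      Finset.sum_comm
    have R2 : ∀ k ∈ Finset.Icc (a + b1 + c - d) (min a c),
        (∑ V ∈ (Finset.univ : Finset (Fin d)).powersetCard (b1 + c),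
            ((-1 : ℚ) ^ (k - (a + b1 + c - d)) *
                ((k - 1).choose (a + b1 + c - d - 1) : ℚ) * ((b1 + k).choose k : ℚ)) *
              (((cntS d (plcs d 0 w) V (a - k)).card : ℚ) * g (wrd d V)))
        = ((-1 : ℚ) ^ (k - (a + b1 + c - d)) *
              ((k - 1).choose (a + b1 + c - d - 1) : ℚ) * ((b1 + k).choose k : ℚ)) *
            ∑ S ∈ (plcs d 0 w).powersetCard (a - k),
              if content 2 d (updAll d w S 1) = ![b1 + k, b2 - k] then
                ∑ T ∈ ((plcs d 0 w \ S)ᶜ).powersetCard (c - k),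
                  g (wrd d ((plcs d 0 w \ S) ∪ T))
              else 0 := by
      intro k hk
      rw [← Finset.mul_sum, e0 k hk]
    exact L1.trans (L2.trans (L3.trans (R1.trans (Finset.sum_congr rfl R2))))
  · -- the vanishing case
    have hL : (∑ S ∈ (plcs d 0 w).powersetCard a,
          if content 2 d (updAll d w S 1) = ![b1, b2] then
            ∑ T ∈ ((plcs d 0 w \ S)ᶜ).powersetCard c, g (wrd d ((plcs d 0 w \ S) ∪ T))
          else 0) = 0 := by
      refine Finset.sum_eq_zero fun S hS => ?_
      have h1 := mem_powersetCard.mp hS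
      have h2 : a ≤ (plcs d 0 w).card := h1.2 ▸ Finset.card_le_card h1.1
      rw [if_neg]
      intro hcc
      obtain ⟨e1, e2⟩ := (hcond a b1 b2 S hS).mp hcc
      omega
    have hR : ∀ k ∈ Finset.Icc (a + b1 + c - d) (min a c),
        ((-1 : ℚ) ^ (k - (a + b1 + c - d)) *
              ((k - 1).choose (a + b1 + c - d - 1) : ℚ) * ((b1 + k).choose k : ℚ)) *
            (∑ S ∈ (plcs d 0 w).powersetCard (a - k),
              if content 2 d (updAll d w S 1) = ![b1 + k, b2 - k] then
                ∑ T ∈ ((plcs d 0 w \ S)ᶜ).powersetCard (c - k),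
                  g (wrd d ((plcs d 0 w \ S) ∪ T))
              else 0) = 0 := by
      intro k hk
      rw [Finset.mem_Icc] at hk
      have hka : k ≤ a := by omega
      have hinner : (∑ S ∈ (plcs d 0 w).powersetCard (a - k),
          if content 2 d (updAll d w S 1) = ![b1 + k, b2 - k] then
            ∑ T ∈ ((plcs d 0 w \ S)ᶜ).powersetCard (c - k),
              g (wrd d ((plcs d 0 w \ S) ∪ T))
          else 0) = 0 := by
        refine Finset.sum_eq_zero fun S hS => ?_
        have h1 := mem_powersetCard.mp hS
        have h2 : a - k ≤ (plcs d 0 w).card := h1.2 ▸ Finset.card_le_card h1.1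
        rw [if_neg]
        intro hcc
        obtain ⟨e1, e2⟩ := (hcond (a - k) (b1 + k) (b2 - k) S hS).mp hcc
        omega
      rw [hinner, mul_zero]
    rw [hL, Finset.sum_congr rfl hR, Finset.sum_const, smul_zero]
end
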